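/- Let a > 0 and let u ∈ C⁴([0,a]) satisfy the elastica equation (1/√(1+u'²)) · d/dx( κ_u'/√(1+u'²) ) + (1/2)κ_u³ = 0 on (0,a), where κ_u = u''/(1+u'²)^{3/2}. If u''(0) = 0 and u'''(0) = 0, then u'' ≡ 0 on [0,a]; that is, u is an affine function. -/

import Mathlib

open Real MeasureTheory

/-- The curvature of the graph `(x, u x)`. -/
noncomputable def curv (u : ℝ → ℝ) (x : ℝ) : ℝ :=
  iteratedDeriv 2 u x / (1 + deriv u x ^ 2) ^ ((3:ℝ)/2)

/-- `u` satisfies the elastica equation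
`(1/√(1+u'²)) (κ_u'/√(1+u'²))' + κ_u³/2 = 0` on the set `E`. -/
def ElasticaOn (u : ℝ → ℝ) (E : Set ℝ) : Prop :=
  ∀ x ∈ E,
    (1 / Real.sqrt (1 + deriv u x ^ 2)) *
        deriv (fun y => deriv (curv u) y / Real.sqrt (1 + deriv u y ^ 2)) x
      + (1/2) * curv u x ^ 3 = 0


/-!
In terms of arc length the elastica equation reads `κ_ss + κ³/2 = 0`. As a first-order system
in `x` for `F = (κ, κ_s)` it is `κ' = w κ_s`, `κ_s' = -(1/2) w κ³` with `w = √(1 + u'²)`.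
On the compact interval `w` and `κ` are bounded, so `‖F'‖ ≤ K ‖F‖`; since `F(0) = 0` by
`u''(0) = u'''(0) = 0`, Grönwall's inequality forces `F ≡ 0`. Hence `u'' ≡ 0` and `u` is affine.
-/

open Set

noncomputable def speed (u : ℝ → ℝ) (x : ℝ) : ℝ :=
  √(1 + deriv u x ^ 2)

/-- The derivative `κ_s` of the curvature with respect to arc length `s`, as `ds = speed u dx`. -/
noncomputable def curvArcDeriv (u : ℝ → ℝ) (x : ℝ) : ℝ :=
  deriv (curv u) x / speed u x

section Regularity

variable {u : ℝ → ℝ} {n : WithTop ℕ∞}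

lemma speed_pos (u : ℝ → ℝ) (x : ℝ) : 0 < speed u x :=
  Real.sqrt_pos.2 (by positivity)

lemma curv_eq_zero_iff {x : ℝ} : curv u x = 0 ↔ iteratedDeriv 2 u x = 0 := by
  rw [curv, div_eq_zero_iff, or_iff_left (Real.rpow_pos_of_pos (by positivity) _).ne']

lemma deriv_curv_eq_speed_mul (x : ℝ) : deriv (curv u) x = speed u x * curvArcDeriv u x :=
  (mul_div_cancel₀ _ (speed_pos u x).ne').symm

lemma contDiff_speed (hu : ContDiff ℝ (n + 1) u) : ContDiff ℝ n (speed u) :=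
  (contDiff_const.add (hu.deriv'.pow 2)).sqrt fun _ => (by positivity : (0 : ℝ) < _).ne'

lemma contDiff_curv (hu : ContDiff ℝ (n + 2) u) : ContDiff ℝ n (curv u) := by
  rw [show n + 2 = n + 1 + 1 by rw [add_assoc]; norm_num] at hu
  have hu2 : iteratedDeriv 2 u = deriv (deriv u) := by
    rw [iteratedDeriv_eq_iterate]; rfl
  have hden : ContDiff ℝ n fun x => (1 + deriv u x ^ 2) ^ ((3 : ℝ) / 2) :=
    ((contDiff_const.add (hu.deriv'.pow 2)).rpow_const_of_ne
      fun _ => (by positivity : (0 : ℝ) < _).ne').of_le le_self_add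
  exact (hu2 ▸ hu.deriv'.deriv').div hden fun _ =>
    (Real.rpow_pos_of_pos (by positivity) _).ne'

lemma contDiff_curvArcDeriv (hu : ContDiff ℝ (n + 3) u) : ContDiff ℝ n (curvArcDeriv u) := by
  have hκ : ContDiff ℝ (n + 1 + 2) u := by rwa [add_assoc]
  have hw : ContDiff ℝ (n + 1) u := hu.of_le (by gcongr; norm_num)
  exact (contDiff_curv hκ).deriv'.div (contDiff_speed hw) fun x => (speed_pos u x).ne'

lemma deriv_curv_eq_zero (hu : ContDiff ℝ 3 u) {x : ℝ} (h2 : iteratedDeriv 2 u x = 0)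
    (h3 : iteratedDeriv 3 u x = 0) : deriv (curv u) x = 0 := by
  have hnum : HasDerivAt (iteratedDeriv 2 u) (iteratedDeriv 3 u x) x := by
    have := (hu.differentiable_iteratedDeriv' 2 x).hasDerivAt
    rwa [← iteratedDeriv_succ] at this
  have hu' : DifferentiableAt ℝ (deriv u) x := (hu.of_le (by norm_num)).differentiable_deriv_two x
  have hden : DifferentiableAt ℝ (fun x => (1 + deriv u x ^ 2) ^ ((3 : ℝ) / 2)) x :=
    ((hu'.pow 2).const_add 1).rpow_const (Or.inr (by norm_num))
  change deriv (fun x => iteratedDeriv 2 u x / (1 + deriv u x ^ 2) ^ ((3 : ℝ) / 2)) x = 0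
  rw [(hnum.fun_div hden.hasDerivAt (Real.rpow_pos_of_pos (by positivity) _).ne').deriv, h2, h3]
  simp

end Regularity

lemma ElasticaOn.deriv_curvArcDeriv {u : ℝ → ℝ} {E : Set ℝ} (h : ElasticaOn u E) {x : ℝ}
    (hx : x ∈ E) : deriv (curvArcDeriv u) x = -(1 / 2) * speed u x * curv u x ^ 3 := by
  have hw := speed_pos u x
  have h := h x hx
  change 1 / speed u x * deriv (curvArcDeriv u) x + 1 / 2 * curv u x ^ 3 = 0 at h
  field_simp at h
  linarith

lemma norm_elasticaField_le {w k p B C : ℝ} (hw : |w| ≤ B) (hk : |k| ≤ C) :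
    ‖(w * p, -(1 / 2) * w * k ^ 3)‖ ≤ B * (1 + C ^ 2) * ‖(k, p)‖ := by
  have hB : 0 ≤ B := (abs_nonneg w).trans hw
  have hC : |k| ^ 2 ≤ C ^ 2 := pow_le_pow_left₀ (abs_nonneg k) hk 2
  simp only [Prod.norm_mk, Real.norm_eq_abs]
  set M := max |k| |p|
  have hM : 0 ≤ M := (abs_nonneg k).trans (le_max_left _ _)
  refine max_le ?_ ?_
  · calc |w * p| = |w| * |p| := abs_mul w p
      _ ≤ B * M := mul_le_mul hw (le_max_right _ _) (abs_nonneg p) hB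
      _ ≤ B * (1 + C ^ 2) * M := by nlinarith [mul_nonneg (mul_nonneg hB (sq_nonneg C)) hM]
  · have hk3 : |k| ^ 3 ≤ C ^ 2 * M := by
      rw [pow_succ]
      exact mul_le_mul hC (le_max_left _ _) (abs_nonneg k) (sq_nonneg C)
    calc |-(1 / 2) * w * k ^ 3| = 1 / 2 * (|w| * |k| ^ 3) := by
          rw [abs_mul, abs_mul, abs_pow]; norm_num; ring
      _ ≤ 1 / 2 * (B * (C ^ 2 * M)) := by gcongr
      _ ≤ B * (1 + C ^ 2) * M := by nlinarith [mul_nonneg hB hM]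

lemma eq_of_deriv_eq_zero_on_Ico {f : ℝ → ℝ} {a b : ℝ} (hf : Differentiable ℝ f)
    (h : ∀ x ∈ Ico a b, deriv f x = 0) : ∀ x ∈ Icc a b, f x = f a :=
  constant_of_has_deriv_right_zero hf.continuous.continuousOn fun x hx =>
    h x hx ▸ (hf x).hasDerivAt.hasDerivWithinAt

lemma exists_affine_of_iteratedDeriv_two_eq_zero {u : ℝ → ℝ} {a b : ℝ}
    (hu : ContDiff ℝ 2 u) (h : ∀ x ∈ Icc a b, iteratedDeriv 2 u x = 0) :
    ∃ m c : ℝ, ∀ x ∈ Icc a b, u x = m * x + c := by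
  have hud : Differentiable ℝ u := hu.differentiable (by norm_num)
  have hu' : Differentiable ℝ (deriv u) := hu.differentiable_deriv_two
  have hslope := eq_of_deriv_eq_zero_on_Ico hu' fun x hx => by
    simpa [iteratedDeriv_succ] using h x (Ico_subset_Icc_self hx)
  have hline : ∀ x ∈ Icc a b, u x - deriv u a * x = u a - deriv u a * a := by
    refine eq_of_deriv_eq_zero_on_Ico (f := fun x => u x - deriv u a * x) (by fun_prop) ?_
    intro x hx
    rw [deriv_fun_sub (hud x) (by fun_prop)]
    simp [hslope x (Ico_subset_Icc_self hx)]
  exact ⟨deriv u a, u a - deriv u a * a, fun x hx => by linarith [hline x hx]⟩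

theorem ElasticaOn.curv_eq_zero_of_eq_zero_left {u : ℝ → ℝ} {a b : ℝ}
    (hu : ContDiff ℝ 4 u) (h : ElasticaOn u (Ioo a b)) (hκ : curv u a = 0)
    (hκ' : deriv (curv u) a = 0) :
    ∀ x ∈ Icc a b, curv u x = 0 := by
  have hκC2 : ContDiff ℝ 2 (curv u) := contDiff_curv (by convert hu using 1; norm_num)
  have hvC1 : ContDiff ℝ 1 (curvArcDeriv u) :=
    contDiff_curvArcDeriv (by convert hu using 1; norm_num)
  have hwC : Continuous (speed u) := (contDiff_speed (n := 0) (hu.of_le (by norm_num))).continuous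
  have hode : ∀ x ∈ Ico a b,
      deriv (curvArcDeriv u) x = -(1 / 2) * speed u x * curv u x ^ 3 := by
    have := Set.EqOn.closure (fun x hx => h.deriv_curvArcDeriv hx) hvC1.continuous_deriv_one
      (by fun_prop : Continuous fun x => -(1 / 2) * speed u x * curv u x ^ 3)
    have hsub : Ico a b ⊆ closure (Ioo a b) := by
      simpa using Ico_subset_closure_interior a b
    exact fun x hx => this (hsub hx)
  obtain ⟨B, hB⟩ := isCompact_Icc.exists_bound_of_continuousOn hwC.continuousOn (s := Icc a b)
  obtain ⟨C, hC⟩ := isCompact_Icc.exists_bound_of_continuousOn hκC2.continuous.continuousOn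
    (s := Icc a b)
  have hderiv : ∀ x, HasDerivAt (fun x => (curv u x, curvArcDeriv u x))
      (deriv (curv u) x, deriv (curvArcDeriv u) x) x := fun x =>
    (hκC2.differentiable two_ne_zero x).hasDerivAt.prodMk
      (hvC1.differentiable one_ne_zero x).hasDerivAt
  have hF := eq_zero_of_abs_deriv_le_mul_abs_self_of_eq_zero_right (a := a) (b := b)
    (hκC2.continuous.prodMk hvC1.continuous).continuousOn
    (fun x _ => (hderiv x).hasDerivWithinAt) (by simp [hκ, curvArcDeriv, hκ'])
    (K := B * (1 + C ^ 2)) fun x hx => by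
      rw [deriv_curv_eq_speed_mul, hode x hx]
      exact norm_elasticaField_le (hB x (Ico_subset_Icc_self hx)) (hC x (Ico_subset_Icc_self hx))
  exact fun x hx => congrArg Prod.fst (hF x hx)

theorem stmt_5 (a : ℝ) (u : ℝ → ℝ) (hu : ContDiff ℝ 4 u)
    (heq : ElasticaOn u (Set.Ioo 0 a))
    (h2 : iteratedDeriv 2 u 0 = 0) (h3 : iteratedDeriv 3 u 0 = 0) :
    (∀ x ∈ Set.Icc (0:ℝ) a, iteratedDeriv 2 u x = 0) ∧
    ∃ m b : ℝ, ∀ x ∈ Set.Icc (0:ℝ) a, u x = m * x + b := by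
  have hκ := heq.curv_eq_zero_of_eq_zero_left hu (curv_eq_zero_iff.2 h2)
    (deriv_curv_eq_zero (hu.of_le (by norm_num)) h2 h3)
  have hu2 : ∀ x ∈ Icc 0 a, iteratedDeriv 2 u x = 0 := fun x hx => curv_eq_zero_iff.1 (hκ x hx)
  exact ⟨hu2, exists_affine_of_iteratedDeriv_two_eq_zero (hu.of_le (by norm_num)) hu2⟩
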